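/- arXiv:1606.06265 — 3 statements merged into one kernel-verified Lean document; each statement's English description precedes it below -/
import Mathlib

section
/- Let G contain a diamond: a 5-cycle C = u1 z1 z2 u2 w where u1, u2 have a common neighbor x1 ∉ V(C), w has a neighbor x2 ∉ V(C), deg(u1)=deg(u2)=deg(w)=3, and deg(z1)=deg(z2)=2. Let G' be obtained from G − V(C) by adding a new path x1 v1 v2 x2 with new vertices v1, v2. Then |V(G)| = |V(G')| + 3 and α(G) = α(G') + 1. -/
open SimpleGraph

/-- The independence number of a graph: the largest size of a set of pairwise
non-adjacent vertices. -/
noncomputable def alphaNum {V : Type*} (G : SimpleGraph V) : ℕ :=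
  sSup {n | ∃ s : Finset V, ((s : Set V).Pairwise fun a b => ¬ G.Adj a b) ∧ s.card = n}

/-- A diamond: a 5-cycle `u1 z1 z2 u2 w` such that `u1, u2` have a common neighbor
`x1` outside the cycle, `w` has a neighbor `x2` outside the cycle, the vertices
`u1, u2, w` have degree 3 and `z1, z2` have degree 2. -/
def IsDiamond {V : Type*} (G : SimpleGraph V) (u1 z1 z2 u2 w x1 x2 : V) : Prop :=
  [u1, z1, z2, u2, w, x1, x2].Nodup ∧
  G.Adj u1 z1 ∧ G.Adj z1 z2 ∧ G.Adj z2 u2 ∧ G.Adj u2 w ∧ G.Adj w u1 ∧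
  G.Adj x1 u1 ∧ G.Adj x1 u2 ∧ G.Adj w x2 ∧
  (G.neighborSet u1).ncard = 3 ∧ (G.neighborSet u2).ncard = 3 ∧
  (G.neighborSet w).ncard = 3 ∧
  (G.neighborSet z1).ncard = 2 ∧ (G.neighborSet z2).ncard = 2

/-- The graph obtained by replacing the diamond `u1 z1 z2 u2 w` by a path
`x1 v1 v2 x2` with two new vertices `v1, v2` (encoded as `Fin 2`). -/
def diamondReplaced {V : Type*} (G : SimpleGraph V) (u1 z1 z2 u2 w x1 x2 : V) :
    SimpleGraph ({x : V // x ∉ ({u1, z1, z2, u2, w} : Set V)} ⊕ Fin 2) :=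
  SimpleGraph.fromRel fun a b =>
    match a, b with
    | .inl a, .inl b => G.Adj a.1 b.1
    | .inl a, .inr i => (a.1 = x1 ∧ i = 0) ∨ (a.1 = x2 ∧ i = 1)
    | .inr _, .inr _ => True
    | _, _ => False

/-!
Sending `v1 ↦ u1` and `v2 ↦ w` embeds `G'` into `G` as the induced subgraph on
`V(G) ∖ {z1, z2, u2}`: outside the cycle, `u1` and `w` see only `x1` and `x2`.
An independent set of `G'` then grows by one vertex in `G`: by `z2` if it contains `u1`, by `z1`
otherwise, since their remaining neighbours lie in `{z1, z2, u2}`. Conversely, an independent set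
of `G` meets the path `z1 z2 u2` in at most one vertex unless it contains both `z1` and `u2`; in
that case trading them for `u1` loses one vertex and keeps independence, because the other
neighbours `w, x1` of `u1` are adjacent to `u2`.
-/

open Finset

lemma alphaNum_eq_indepNum {V : Type*} (G : SimpleGraph V) : alphaNum G = G.indepNum := by
  simp only [alphaNum, indepNum, isNIndepSet_iff, isIndepSet_iff]

namespace SimpleGraph

variable {V W : Type*} {G : SimpleGraph V} {H : SimpleGraph W}

lemma IsIndepSet.insert {s : Set V} {z : V} (hs : G.IsIndepSet s) (hz : ∀ y ∈ s, ¬G.Adj z y) :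
    G.IsIndepSet (insert z s) :=
  Set.Pairwise.insert hs fun y hy _ => ⟨hz y hy, fun hyz => hz y hy hyz.symm⟩

lemma IsIndepSet.map (f : H ↪g G) {t : Finset W} (ht : H.IsIndepSet t) :
    G.IsIndepSet (t.map f.toEmbedding) := by
  rw [coe_map]
  rintro _ ⟨a, ha, rfl⟩ _ ⟨b, hb, rfl⟩ hab
  simpa using ht ha hb (ne_of_apply_ne _ hab)

lemma IsIndepSet.card_le_indepNum_of_subset_range [Finite W] (f : H ↪g G) {s : Finset V}
    (hs : G.IsIndepSet s) (hsf : ↑s ⊆ Set.range f) : #s ≤ H.indepNum := by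
  set t := s.preimage f f.injective.injOn
  have hts : t.map f.toEmbedding = s := by
    ext v
    simp only [mem_map, mem_preimage, t]
    refine ⟨?_, fun hv => ?_⟩
    · rintro ⟨a, ha, rfl⟩
      exact ha
    · obtain ⟨a, rfl⟩ := hsf hv
      exact ⟨a, hv, rfl⟩
  have ht : H.IsIndepSet t := fun a ha b hb hab hadj =>
    hs (mem_preimage.mp ha) (mem_preimage.mp hb) (f.injective.ne hab) (f.map_adj_iff.mpr hadj)
  rw [← hts, card_map]
  exact ht.card_le_indepNum

lemma neighborSet_eq_of_subset_of_ncard_eq {v : V} {s : Set V} (hs : s ⊆ G.neighborSet v)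
    (hcard : (G.neighborSet v).ncard = s.ncard) (hne : s.ncard ≠ 0) : G.neighborSet v = s :=
  (Set.eq_of_subset_of_ncard_le hs hcard.le (Set.finite_of_ncard_ne_zero (hcard ▸ hne))).symm

end SimpleGraph

namespace IsDiamond

variable {V : Type*} {G : SimpleGraph V} {u1 z1 z2 u2 w x1 x2 : V}
  (h : IsDiamond G u1 z1 z2 u2 w x1 x2)
include h

lemma neighborSet_u1 : G.neighborSet u1 = {z1, w, x1} := by
  obtain ⟨hnd, h12, -, -, -, h51, hx1u1, -, -, d1, -⟩ := h
  simp only [List.nodup_cons, List.mem_cons, List.not_mem_nil, or_false, not_or,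
    List.nodup_nil, not_false_eq_true, and_true] at hnd
  have h3 : ({z1, w, x1} : Set V).ncard = 3 :=
    Set.ncard_eq_three.mpr ⟨z1, w, x1, by tauto, by tauto, by tauto, rfl⟩
  refine neighborSet_eq_of_subset_of_ncard_eq ?_ (d1.trans h3.symm) (by omega)
  simp [Set.insert_subset_iff, h12, h51.symm, hx1u1.symm]

lemma neighborSet_w : G.neighborSet w = {u1, u2, x2} := by
  obtain ⟨hnd, -, -, -, h45, h51, -, -, hwx2, -, -, d3, -⟩ := h
  simp only [List.nodup_cons, List.mem_cons, List.not_mem_nil, or_false, not_or,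
    List.nodup_nil, not_false_eq_true, and_true] at hnd
  have h3 : ({u1, u2, x2} : Set V).ncard = 3 :=
    Set.ncard_eq_three.mpr ⟨u1, u2, x2, by tauto, by tauto, by tauto, rfl⟩
  refine neighborSet_eq_of_subset_of_ncard_eq ?_ (d3.trans h3.symm) (by omega)
  simp [Set.insert_subset_iff, h51, h45.symm, hwx2]

lemma neighborSet_z1 : G.neighborSet z1 = {u1, z2} := by
  obtain ⟨hnd, h12, h23, -, -, -, -, -, -, -, -, -, e1, -⟩ := h
  simp only [List.nodup_cons, List.mem_cons, List.not_mem_nil, or_false, not_or,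
    List.nodup_nil, not_false_eq_true, and_true] at hnd
  have h2 : ({u1, z2} : Set V).ncard = 2 := Set.ncard_pair (by tauto)
  refine neighborSet_eq_of_subset_of_ncard_eq ?_ (e1.trans h2.symm) (by omega)
  simp [Set.insert_subset_iff, h12.symm, h23]

lemma neighborSet_z2 : G.neighborSet z2 = {z1, u2} := by
  obtain ⟨hnd, -, h23, h34, -, -, -, -, -, -, -, -, -, e2⟩ := h
  simp only [List.nodup_cons, List.mem_cons, List.not_mem_nil, or_false, not_or,
    List.nodup_nil, not_false_eq_true, and_true] at hnd
  have h2 : ({z1, u2} : Set V).ncard = 2 := Set.ncard_pair (by tauto)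
  refine neighborSet_eq_of_subset_of_ncard_eq ?_ (e2.trans h2.symm) (by omega)
  simp [Set.insert_subset_iff, h23.symm, h34]

lemma adj_u1_iff_of_notMem {a : V} (ha : a ∉ ({u1, z1, z2, u2, w} : Set V)) :
    G.Adj a u1 ↔ a = x1 := by
  rw [G.adj_comm, ← mem_neighborSet, h.neighborSet_u1]
  simp only [Set.mem_insert_iff, Set.mem_singleton_iff, not_or] at ha ⊢
  tauto

lemma adj_w_iff_of_notMem {a : V} (ha : a ∉ ({u1, z1, z2, u2, w} : Set V)) :
    G.Adj a w ↔ a = x2 := by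
  rw [G.adj_comm, ← mem_neighborSet, h.neighborSet_w]
  simp only [Set.mem_insert_iff, Set.mem_singleton_iff, not_or] at ha ⊢
  tauto

lemma adj_u1_w : G.Adj u1 w := h.2.2.2.2.2.1.symm

lemma injective_sumElim :
    Function.Injective (Sum.elim Subtype.val ![u1, w] :
      {x : V // x ∉ ({u1, z1, z2, u2, w} : Set V)} ⊕ Fin 2 → V) := by
  have hu1w : u1 ≠ w := h.adj_u1_w.ne
  rintro (a | i) (b | j) hab
  · exact congrArg _ (Subtype.ext hab)
  · exact (a.2 (by fin_cases j <;> simp_all)).elim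
  · exact (b.2 (by fin_cases i <;> simp_all)).elim
  · fin_cases i <;> fin_cases j <;> simp_all

def embedding : diamondReplaced G u1 z1 z2 u2 w x1 x2 ↪g G where
  toFun := Sum.elim Subtype.val ![u1, w]
  inj' := h.injective_sumElim
  map_rel_iff' := by
    rintro (a | i) (b | j) <;> simp only [Function.Embedding.coeFn_mk, Sum.elim_inl, Sum.elim_inr]
    · simp only [diamondReplaced, fromRel_adj, G.adj_comm b.1, or_self]
      exact ⟨fun hab => ⟨fun he => hab.ne (by simp_all), hab⟩, And.right⟩
    · fin_cases j <;>
        simp [diamondReplaced, h.adj_u1_iff_of_notMem a.2, h.adj_w_iff_of_notMem a.2]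
    · fin_cases i <;>
        simp [diamondReplaced, G.adj_comm _ b.1, h.adj_u1_iff_of_notMem b.2,
          h.adj_w_iff_of_notMem b.2]
    · fin_cases i <;> fin_cases j <;> simp [diamondReplaced, h.adj_u1_w, h.adj_u1_w.symm]

@[simp] lemma embedding_inl (a : {x : V // x ∉ ({u1, z1, z2, u2, w} : Set V)}) :
    h.embedding (.inl a) = a := rfl

@[simp] lemma embedding_inr_zero : h.embedding (.inr 0) = u1 := rfl

@[simp] lemma embedding_inr_one : h.embedding (.inr 1) = w := rfl

lemma mem_range_embedding {v : V} :
    v ∈ Set.range h.embedding ↔ v ≠ z1 ∧ v ≠ z2 ∧ v ≠ u2 := by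
  have hnd := h.1
  simp only [List.nodup_cons, List.mem_cons, List.not_mem_nil, or_false, not_or,
    List.nodup_nil, not_false_eq_true, and_true] at hnd
  constructor
  · rintro ⟨a | i, rfl⟩
    · have := a.2
      simp only [Set.mem_insert_iff, Set.mem_singleton_iff, not_or] at this
      simp [this]
    · fin_cases i <;> simp <;> tauto
  · rintro ⟨hz1, hz2, hu2⟩
    by_cases hv : v ∈ ({u1, z1, z2, u2, w} : Set V)
    · simp only [Set.mem_insert_iff, Set.mem_singleton_iff] at hv
      rcases hv with rfl | rfl | rfl | rfl | rfl
      · exact ⟨.inr 0, rfl⟩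
      · exact (hz1 rfl).elim
      · exact (hz2 rfl).elim
      · exact (hu2 rfl).elim
      · exact ⟨.inr 1, rfl⟩
    · exact ⟨.inl ⟨v, hv⟩, rfl⟩

lemma indepNum_diamondReplaced_add_one_le [Finite V] :
    (diamondReplaced G u1 z1 z2 u2 w x1 x2).indepNum + 1 ≤ G.indepNum := by
  classical
  obtain ⟨t, ht, hcard⟩ := (diamondReplaced G u1 z1 z2 u2 w x1 x2).exists_isNIndepSet_indepNum
  set s := t.map h.embedding.toEmbedding
  have hs : ∀ y ∈ s, y ≠ z1 ∧ y ≠ z2 ∧ y ≠ u2 := fun y hy =>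
    h.mem_range_embedding.mp (by obtain ⟨a, -, rfl⟩ := mem_map.mp hy; exact ⟨a, rfl⟩)
  obtain ⟨z, hzs, hz⟩ : ∃ z ∉ s, ∀ y ∈ s, ¬G.Adj z y := by
    by_cases hu1 : u1 ∈ s
    · refine ⟨z2, fun hz2 => (hs z2 hz2).2.1 rfl, fun y hy hadj => ?_⟩
      rw [← mem_neighborSet, h.neighborSet_z2] at hadj
      rcases hadj with rfl | rfl
      exacts [(hs _ hy).1 rfl, (hs _ hy).2.2 rfl]
    · refine ⟨z1, fun hz1 => (hs z1 hz1).1 rfl, fun y hy hadj => ?_⟩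
      rw [← mem_neighborSet, h.neighborSet_z1] at hadj
      rcases hadj with rfl | rfl
      exacts [hu1 hy, (hs _ hy).2.1 rfl]
  calc (diamondReplaced G u1 z1 z2 u2 w x1 x2).indepNum + 1 = #(insert z s) := by
        rw [card_insert_of_notMem hzs, card_map, hcard]
    _ ≤ G.indepNum := by
        refine IsIndepSet.card_le_indepNum ?_
        rw [coe_insert]
        exact (ht.map h.embedding).insert hz

lemma indepNum_le_indepNum_diamondReplaced_add_one [Finite V] :
    G.indepNum ≤ (diamondReplaced G u1 z1 z2 u2 w x1 x2).indepNum + 1 := by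
  classical
  have ⟨_, h12, h23, h34, h45, _, _, hx1u2, _⟩ := h
  obtain ⟨s, hs, hcard⟩ := G.exists_isNIndepSet_indepNum
  have hsplit := card_sdiff_add_card_inter s {z1, z2, u2}
  have hrange : (↑(s \ {z1, z2, u2}) : Set V) ⊆ Set.range h.embedding := fun v hv => by
    simp only [coe_sdiff, Set.mem_sdiff, mem_coe, mem_insert, mem_singleton, not_or] at hv
    exact h.mem_range_embedding.mpr hv.2
  have hG' := IsIndepSet.card_le_indepNum_of_subset_range h.embedding
    (hs.mono (coe_subset.mpr sdiff_subset)) hrange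
  by_cases hzu : z1 ∈ s ∧ u2 ∈ s
  · obtain ⟨hz1s, hu2s⟩ := hzu
    have hu1s : u1 ∉ s := fun hu1s => hs hu1s hz1s h12.ne h12
    have hz2s : z2 ∉ s := fun hz2s => hs hz1s hz2s h23.ne h23
    have hinter : #(s ∩ {z1, z2, u2}) ≤ 2 := by
      refine (card_le_card (t := {z1, u2}) fun v hv => ?_).trans card_le_two
      simp only [mem_inter, mem_insert, mem_singleton] at hv ⊢
      rcases hv with ⟨hvs, rfl | rfl | rfl⟩
      exacts [Or.inl rfl, (hz2s hvs).elim, Or.inr rfl]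
    have hind : G.IsIndepSet (insert u1 (s \ {z1, z2, u2}) : Finset V) := by
      rw [coe_insert]
      refine IsIndepSet.insert (hs.mono (coe_subset.mpr sdiff_subset)) fun y hy hadj => ?_
      rw [← mem_neighborSet, h.neighborSet_u1] at hadj
      simp only [coe_sdiff, Set.mem_sdiff, mem_coe, coe_insert, coe_singleton, Set.mem_insert_iff,
        Set.mem_singleton_iff, not_or] at hy
      rcases hadj with rfl | rfl | rfl
      · exact hy.2.1 rfl
      · exact hs hu2s hy.1 h45.ne h45
      · exact hs hu2s hy.1 hx1u2.ne.symm hx1u2.symm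
    have hrange' : (↑(insert u1 (s \ {z1, z2, u2})) : Set V) ⊆ Set.range h.embedding := by
      rw [coe_insert]
      exact Set.insert_subset ⟨.inr 0, rfl⟩ hrange
    have := IsIndepSet.card_le_indepNum_of_subset_range h.embedding hind hrange'
    rw [card_insert_of_notMem fun hu1 => hu1s (mem_sdiff.mp hu1).1] at this
    omega
  · have : #(s ∩ {z1, z2, u2}) ≤ 1 := by
      refine card_le_one.mpr fun a ha b hb => ?_
      simp only [mem_inter, mem_insert, mem_singleton] at ha hb
      by_contra hab
      rcases ha with ⟨has, rfl | rfl | rfl⟩ <;> rcases hb with ⟨hbs, rfl | rfl | rfl⟩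
      all_goals first
        | exact hab rfl
        | exact hzu ⟨has, hbs⟩
        | exact hzu ⟨hbs, has⟩
        | exact hs has hbs hab (by assumption)
        | exact hs has hbs hab (by symm; assumption)
    omega

lemma card_eq_card_diamondReplaced_add_three [Finite V] :
    Nat.card V = Nat.card ({x : V // x ∉ ({u1, z1, z2, u2, w} : Set V)} ⊕ Fin 2) + 3 := by
  have hnd := h.1
  simp only [List.nodup_cons, List.mem_cons, List.not_mem_nil, or_false, not_or,
    List.nodup_nil, not_false_eq_true, and_true] at hnd
  have h5 : ({u1, z1, z2, u2, w} : Set V).ncard = 5 := by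
    rw [Set.ncard_insert_of_notMem (by simp; tauto), Set.ncard_insert_of_notMem (by simp; tauto),
      Set.ncard_insert_of_notMem (by simp; tauto), Set.ncard_pair (by tauto)]
  have := Set.ncard_add_ncard_compl ({u1, z1, z2, u2, w} : Set V)
  rw [Nat.card_sum, Nat.card_eq_fintype_card (α := Fin 2), Fintype.card_fin]
  have hc := Nat.card_coe_set_eq ({u1, z1, z2, u2, w} : Set V)ᶜ
  change Nat.card {x : V // x ∉ ({u1, z1, z2, u2, w} : Set V)} = _ at hc
  omega

end IsDiamond

/-- Replacing a diamond `u1 z1 z2 u2 w` by a path `x1 v1 v2 x2` (with two new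
vertices) yields a graph `G'` with `|V(G)| = |V(G')| + 3` and `α(G) = α(G') + 1`. -/
theorem stmt7 {V : Type} [Finite V] (G : SimpleGraph V) (u1 z1 z2 u2 w x1 x2 : V)
    (hdia : IsDiamond G u1 z1 z2 u2 w x1 x2) :
    Nat.card V =
      Nat.card ({x : V // x ∉ ({u1, z1, z2, u2, w} : Set V)} ⊕ Fin 2) + 3 ∧
    alphaNum G = alphaNum (diamondReplaced G u1 z1 z2 u2 w x1 x2) + 1 := by
  refine ⟨hdia.card_eq_card_diamondReplaced_add_three, ?_⟩
  rw [alphaNum_eq_indepNum, alphaNum_eq_indepNum]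
  exact le_antisymm hdia.indepNum_le_indepNum_diamondReplaced_add_one
    hdia.indepNum_diamondReplaced_add_one_le
end

section
/- With notation as in the diamond-replacement lemma: for every independent set S' of G', there exists an independent set S of G with |S| = |S'| + 1 and S ∖ V(C) = S' ∖ {v1, v2}. -/
open SimpleGraph

/-- A finset of vertices is independent if its members are pairwise non-adjacent. -/
def IsIndepFinset {V : Type*} (G : SimpleGraph V) (s : Finset V) : Prop :=
  (s : Set V).Pairwise fun a b => ¬ G.Adj a b

def dmap {V : Type*} {D : Set V} (u1' w' : V) : ({x : V // x ∉ D} ⊕ Fin 2) → V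
  | .inl a => a.1
  | .inr i => if i = 0 then u1' else w'

/-- With notation as in the diamond-replacement lemma: every independent set `S'` of
the replaced graph `G'` yields an independent set `S` of `G` with `|S| = |S'| + 1`
and `S ∖ V(C) = S' ∖ {v1, v2}` (the new path vertices `v1, v2` are `Fin 2`). -/
theorem stmt8 {V : Type} [Finite V] (G : SimpleGraph V) (u1 z1 z2 u2 w x1 x2 : V)
    (hdia : IsDiamond G u1 z1 z2 u2 w x1 x2)
    (S' : Finset ({x : V // x ∉ ({u1, z1, z2, u2, w} : Set V)} ⊕ Fin 2))
    (hS' : IsIndepFinset (diamondReplaced G u1 z1 z2 u2 w x1 x2) S') :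
    ∃ S : Finset V, IsIndepFinset G S ∧ S.card = S'.card + 1 ∧
      ∀ (x : V) (hx : x ∉ ({u1, z1, z2, u2, w} : Set V)),
        x ∈ S ↔ Sum.inl ⟨x, hx⟩ ∈ S' := by
  classical
  obtain ⟨hnd, a1, a2, a3, a4, a5, a6, a7, a8, d1, d2, d3, e1, e2⟩ := hdia
  simp only [List.nodup_cons, List.mem_cons, List.not_mem_nil, or_false, not_or,
    List.nodup_nil, and_true] at hnd
  obtain ⟨⟨n12, n13, n14, n15, n16, n17⟩, ⟨n23, n24, n25, n26, n27⟩, ⟨n34, n35, n36, n37⟩,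
    ⟨n45, n46, n47⟩, ⟨n56, n57⟩, n67⟩ := hnd
  have hz2 : G.neighborSet z2 = {z1, u2} := by
    refine (Set.eq_of_subset_of_ncard_le ?_ ?_ (Set.toFinite _)).symm
    · intro y hy; rcases hy with rfl | hy
      · exact a2.symm
      · rw [Set.mem_singleton_iff] at hy; subst hy; exact a3
    · rw [e2, Set.ncard_pair n24]
  have hu1 : G.neighborSet u1 = {z1, w, x1} := by
    refine (Set.eq_of_subset_of_ncard_le ?_ ?_ (Set.toFinite _)).symm
    · intro y hy; rcases hy with rfl | rfl | hy
      · exact a1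
      · exact a5.symm
      · rw [Set.mem_singleton_iff] at hy; subst hy; exact a6.symm
    · rw [d1, Set.ncard_insert_of_notMem (by simp [n25, n26]), Set.ncard_pair n56]
  have hw : G.neighborSet w = {u2, u1, x2} := by
    refine (Set.eq_of_subset_of_ncard_le ?_ ?_ (Set.toFinite _)).symm
    · intro y hy; rcases hy with rfl | rfl | hy
      · exact a4.symm
      · exact a5
      · rw [Set.mem_singleton_iff] at hy; subst hy; exact a8
    · rw [d3, Set.ncard_insert_of_notMem (by simp [Ne.symm n14, n47]),
        Set.ncard_pair n17]
  have Az2 : ∀ y, G.Adj z2 y → y = z1 ∨ y = u2 := by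
    intro y hy
    have : y ∈ G.neighborSet z2 := hy
    rw [hz2] at this; simpa using this
  have Au1 : ∀ y, G.Adj u1 y → y = z1 ∨ y = w ∨ y = x1 := by
    intro y hy
    have : y ∈ G.neighborSet u1 := hy
    rw [hu1] at this; simpa using this
  have Aw : ∀ y, G.Adj w y → y = u2 ∨ y = u1 ∨ y = x2 := by
    intro y hy
    have : y ∈ G.neighborSet w := hy
    rw [hw] at this; simpa using this
  have hu1D : u1 ∈ ({u1, z1, z2, u2, w} : Set V) := by simp
  have hz1D : z1 ∈ ({u1, z1, z2, u2, w} : Set V) := by simp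
  have hz2D : z2 ∈ ({u1, z1, z2, u2, w} : Set V) := by simp
  have hu2D : u2 ∈ ({u1, z1, z2, u2, w} : Set V) := by simp
  have hwD : w ∈ ({u1, z1, z2, u2, w} : Set V) := by simp
  set f : ({x : V // x ∉ ({u1, z1, z2, u2, w} : Set V)} ⊕ Fin 2) → V := dmap u1 w with hf
  have hfinl : ∀ a, f (Sum.inl a) = a.1 := fun a => rfl
  have hfi : ∀ i : Fin 2, (f (Sum.inr i) = u1 ∧ i = 0) ∨ (f (Sum.inr i) = w ∧ i = 1) := by
    intro i; fin_cases i
    · exact Or.inl ⟨rfl, rfl⟩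
    · exact Or.inr ⟨rfl, rfl⟩
  have hfin : ∀ i : Fin 2, f (Sum.inr i) = u1 ∨ f (Sum.inr i) = w := by
    intro i; rcases hfi i with ⟨h, _⟩ | ⟨h, _⟩
    · exact Or.inl h
    · exact Or.inr h
  have hDmem : ∀ p, f p ∈ ({u1, z1, z2, u2, w} : Set V) → ∃ i : Fin 2, p = Sum.inr i := by
    intro p hp
    match p with
    | .inl a => exact absurd hp a.2
    | .inr i => exact ⟨i, rfl⟩
  have hinradj : ∀ (i j : Fin 2), i ≠ j →
      (diamondReplaced G u1 z1 z2 u2 w x1 x2).Adj (Sum.inr i) (Sum.inr j) := by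
    intro i j hij
    simp only [diamondReplaced, fromRel_adj]
    exact ⟨fun h => hij (Sum.inr_injective h), Or.inl trivial⟩
  have hinj : Set.InjOn f S' := by
    intro p hp q hq hpq
    match p, q with
    | .inl a, .inl b => exact congrArg Sum.inl (Subtype.ext hpq)
    | .inl a, .inr i =>
        exfalso; apply a.2
        have h2 : f (Sum.inr i) ∈ ({u1, z1, z2, u2, w} : Set V) := by
          rcases hfin i with h | h <;> rw [h] <;> assumption
        rw [← hpq] at h2; exact h2
    | .inr i, .inl a =>
        exfalso; apply a.2
        have h2 : f (Sum.inr i) ∈ ({u1, z1, z2, u2, w} : Set V) := by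
          rcases hfin i with h | h <;> rw [h] <;> assumption
        rw [hpq] at h2; exact h2
    | .inr i, .inr j =>
        by_contra hne
        have hij : i ≠ j := fun h => hne (congrArg Sum.inr h)
        exact hS' hp hq (fun h => hij (Sum.inr_injective h)) (hinradj i j hij)
  refine ⟨insert z2 (S'.image f), ?_, ?_, ?_⟩
  · -- independence
    have key0 : ∀ p ∈ S', ¬ G.Adj z2 (f p) := by
      intro p _ hadj
      match p with
      | .inl a =>
        rw [hfinl] at hadj
        rcases Az2 _ hadj with h | h
        · exact a.2 (by rw [h]; exact hz1D)
        · exact a.2 (by rw [h]; exact hu2D)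
      | .inr i =>
        rcases hfin i with h | h <;> rw [h] at hadj
        · rcases Az2 _ hadj with h' | h'
          · exact n12 h'
          · exact n14 h'
        · rcases Az2 _ hadj with h' | h'
          · exact n25 h'.symm
          · exact n45 h'.symm
    have key : ∀ p ∈ S', ∀ q ∈ S', p ≠ q → ¬ G.Adj (f p) (f q) := by
      have keyA : ∀ (a : {x : V // x ∉ ({u1, z1, z2, u2, w} : Set V)}), Sum.inl a ∈ S' →
          ∀ i : Fin 2, Sum.inr i ∈ S' → ¬ G.Adj a.1 (f (Sum.inr i)) := by
        intro a ha i hi hadj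
        rcases hfi i with ⟨h, rfl⟩ | ⟨h, rfl⟩ <;> rw [h] at hadj
        · rcases Au1 _ hadj.symm with h' | h' | h'
          · exact a.2 (by rw [h']; exact hz1D)
          · exact a.2 (by rw [h']; exact hwD)
          · refine hS' ha hi (by simp) ?_
            simp only [diamondReplaced, fromRel_adj]
            exact ⟨by simp, Or.inl (Or.inl ⟨h', trivial⟩)⟩
        · rcases Aw _ hadj.symm with h' | h' | h'
          · exact a.2 (by rw [h']; exact hu2D)
          · exact a.2 (by rw [h']; exact hu1D)
          · refine hS' ha hi (by simp) ?_
            simp only [diamondReplaced, fromRel_adj]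
            exact ⟨by simp, Or.inl (Or.inr ⟨h', trivial⟩)⟩
      intro p hp q hq hne hadj
      match p, q with
      | .inl a, .inl b =>
        refine hS' hp hq hne ?_
        simp only [diamondReplaced, fromRel_adj]
        rw [hfinl, hfinl] at hadj
        exact ⟨hne, Or.inl hadj⟩
      | .inl a, .inr i =>
        rw [hfinl] at hadj
        exact keyA a hp i hq hadj
      | .inr i, .inl a =>
        rw [hfinl] at hadj
        exact keyA a hq i hp hadj.symm
      | .inr i, .inr j =>
        have hij : i ≠ j := fun h => hne (congrArg Sum.inr h)
        exact hS' hp hq hne (hinradj i j hij)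
    unfold IsIndepFinset Set.Pairwise
    intro x hx y hy hxy
    simp only [Finset.coe_insert, Set.mem_insert_iff, Finset.coe_image, Set.mem_image,
      Finset.mem_coe] at hx hy
    rcases hx with rfl | ⟨p, hp, rfl⟩
    · rcases hy with rfl | ⟨q, hq, rfl⟩
      · exact absurd rfl hxy
      · exact key0 q hq
    · rcases hy with rfl | ⟨q, hq, rfl⟩
      · exact fun h => key0 p hp h.symm
      · exact key p hp q hq (fun h => hxy (by rw [h]))
  · -- cardinality
    have hz2nm : z2 ∉ S'.image f := by
      simp only [Finset.mem_image, not_exists]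
      rintro p ⟨hp, hfp⟩
      obtain ⟨i, rfl⟩ := hDmem p (by rw [hfp]; exact hz2D)
      rcases hfin i with h | h <;> rw [h] at hfp
      · exact n13 hfp
      · exact n35 hfp.symm
    rw [Finset.card_insert_of_notMem hz2nm, Finset.card_image_of_injOn hinj]
  · -- the set difference condition
    intro x hx
    constructor
    · intro hxS
      rcases Finset.mem_insert.mp hxS with rfl | hxS
      · exact absurd hz2D hx
      · obtain ⟨p, hp, hfp⟩ := Finset.mem_image.mp hxS
        match p with
        | .inl a =>
          rw [hfinl] at hfp
          have : a = ⟨x, hx⟩ := Subtype.ext hfp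
          rwa [← this]
        | .inr i =>
          exfalso
          apply hx
          rcases hfin i with h | h <;> rw [h] at hfp <;> rw [← hfp] <;> assumption
    · intro hxS
      exact Finset.mem_insert_of_mem (Finset.mem_image.mpr ⟨Sum.inl ⟨x, hx⟩, hxS, rfl⟩)
end

section
/- If S is a maximal independent set in a graph G containing a diamond C = u1 z1 z2 u2 w (with attachments x1, x2 as in the definition), then G has an independent set S* with |S*| = |S| containing z1 or z2. -/
open SimpleGraph

/-- If `S` is a maximal independent set in a graph `G` containing a diamond
`u1 z1 z2 u2 w` (with attachments `x1, x2`), then `G` has an independent set of the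
same size containing `z1` or `z2`. -/
theorem stmt18 {V : Type} [Finite V] (G : SimpleGraph V) (u1 z1 z2 u2 w x1 x2 : V)
    (hdia : IsDiamond G u1 z1 z2 u2 w x1 x2) (S : Finset V)
    (hS : IsIndepFinset G S)
    (hmax : ∀ T : Finset V, S ⊆ T → IsIndepFinset G T → T = S) :
    ∃ S' : Finset V, IsIndepFinset G S' ∧ S'.card = S.card ∧ (z1 ∈ S' ∨ z2 ∈ S') := by
  classical
  obtain ⟨hnd, h1, h2, h3, h4, h5, h6, h7, h8, hd1, hd2, hd3, hdz1, hdz2⟩ := hdia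
  simp only [List.nodup_cons, List.mem_cons, List.mem_singleton, List.not_mem_nil,
    or_false, not_or, List.nodup_nil, and_true] at hnd
  have hu1z2 : u1 ≠ z2 := hnd.1.2.1
  have hz1u2 : z1 ≠ u2 := hnd.2.1.2.1
  have hz1z2 : z1 ≠ z2 := hnd.2.1.1
  have hu2z2 : u2 ≠ z2 := fun h => hnd.2.2.1.1 h.symm
  by_cases hz1 : z1 ∈ S
  · exact ⟨S, hS, rfl, Or.inl hz1⟩
  by_cases hz2 : z2 ∈ S
  · exact ⟨S, hS, rfl, Or.inr hz2⟩
  have hNz1 : G.neighborSet z1 = {u1, z2} := by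
    refine (Set.eq_of_subset_of_ncard_le ?_ ?_ (Set.toFinite _)).symm
    · intro x hx
      rcases hx with rfl | hx
      · exact h1.symm
      · rw [Set.mem_singleton_iff] at hx; subst hx; exact h2
    · rw [hdz1, Set.ncard_pair hu1z2]
  have hNz2 : G.neighborSet z2 = {z1, u2} := by
    refine (Set.eq_of_subset_of_ncard_le ?_ ?_ (Set.toFinite _)).symm
    · intro x hx
      rcases hx with rfl | hx
      · exact h2.symm
      · rw [Set.mem_singleton_iff] at hx; subst hx; exact h3
    · rw [hdz2, Set.ncard_pair hz1u2]
  have key : ∀ z a b : V, z ∉ S → G.neighborSet z = {a, b} → a ∈ S ∨ b ∈ S := by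
    intro z a b hz hN
    by_contra hc
    push_neg at hc
    have hind : IsIndepFinset G (insert z S) := by
      intro p hp q hq hpq
      simp only [Finset.coe_insert, Set.mem_insert_iff, Finset.mem_coe] at hp hq
      rcases hp with rfl | hp
      · rcases hq with rfl | hq
        · exact absurd rfl hpq
        · intro hadj
          have : q ∈ G.neighborSet p := hadj
          rw [hN] at this
          rcases this with rfl | hq2
          · exact hc.1 hq
          · rw [Set.mem_singleton_iff] at hq2; subst hq2; exact hc.2 hq
      · rcases hq with rfl | hq
        · intro hadj
          have : p ∈ G.neighborSet q := hadj.symm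
          rw [hN] at this
          rcases this with rfl | hp2
          · exact hc.1 hp
          · rw [Set.mem_singleton_iff] at hp2; subst hp2; exact hc.2 hp
        · exact hS hp hq hpq
    have := hmax _ (Finset.subset_insert z S) hind
    rw [← this] at hz
    exact hz (Finset.mem_insert_self z S)
  have hu2 : u2 ∈ S := by
    rcases key z2 z1 u2 hz2 hNz2 with h | h
    · exact absurd h hz1
    · exact h
  refine ⟨insert z2 (S.erase u2), ?_, ?_, Or.inr (Finset.mem_insert_self _ _)⟩
  · intro p hp q hq hpq
    simp only [Finset.coe_insert, Set.mem_insert_iff, Finset.mem_coe,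
      Finset.mem_erase] at hp hq
    rcases hp with rfl | hp
    · rcases hq with rfl | hq
      · exact absurd rfl hpq
      · intro hadj
        have : q ∈ G.neighborSet p := hadj
        rw [hNz2] at this
        rcases this with rfl | hq2
        · exact hz1 hq.2
        · rw [Set.mem_singleton_iff] at hq2; exact hq.1 hq2
    · rcases hq with rfl | hq
      · intro hadj
        have : p ∈ G.neighborSet q := hadj.symm
        rw [hNz2] at this
        rcases this with rfl | hp2
        · exact hz1 hp.2
        · rw [Set.mem_singleton_iff] at hp2; exact hp.1 hp2
      · exact hS hp.2 hq.2 hpq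
  · rw [Finset.card_insert_of_notMem (fun h => hz2 (Finset.mem_of_mem_erase h)),
      Finset.card_erase_of_mem hu2]
    have : 1 ≤ S.card := Finset.card_pos.mpr ⟨u2, hu2⟩
    omega
end
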